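/- arXiv:math/0002152 — 2 statements merged into one kernel-verified Lean document; each statement's English description precedes it below -/
import Mathlib

section
/- There exist positive constants such that the coefficients K_{Q,R} satisfy: (1) if Q ⊂ R ⊂ S are cubes then K_{Q,R} ≤ K_{Q,S}, K_{R,S} ≤ C·K_{Q,S}, and K_{Q,S} ≤ C·(K_{Q,R} + K_{R,S}), with C depending only on d, n and C₀; (2) for every a ≥ 1 there is a constant C(a) such that if Q ⊂ R are cubes with l(R) ≤ a·l(Q), then K_{Q,R} ≤ C(a); (3) for every β > 2^n there is a constant C(β, C₀) such that if N is a positive integer and none of the cubes 2Q, 2²Q, …, 2^{N−1}Q is (2,β)-doubling, then K_{Q, 2^N Q} ≤ C(β, C₀); (4) for every β < 2^n there is a constant C(β, C₀) such that if N is a positive integer and μ(2^k Q) ≤ β·μ(2^{k−1} Q) for k = 1, …, N, then K_{Q, 2^N Q} ≤ C(β, C₀). -/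
/-!
Common definitions for formalizing Tolsa, "BMO, H¹, and Calderón–Zygmund
operators for non doubling measures".
-/

open MeasureTheory Metric Set Function
open scoped Classical
open scoped ENNReal NNReal BigOperators

noncomputable section

/-- `ℝ^d` with the Euclidean metric. -/
abbrev Euc (d : ℕ) := EuclideanSpace ℝ (Fin d)

variable {d : ℕ}

/-- The support of a measure: points all of whose balls have positive measure. -/
def measSupp (μ : MeasureTheory.Measure (Euc d)) : Set (Euc d) :=
  {x | ∀ r : ℝ, 0 < r → 0 < μ (Metric.ball x r)}

/-- The growth condition `μ(B(x,r)) ≤ C₀ rⁿ`. -/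
def GrowthBound (μ : MeasureTheory.Measure (Euc d)) (n : ℕ) (C₀ : ℝ) : Prop :=
  ∀ (x : Euc d) (r : ℝ), 0 < r → μ (Metric.ball x r) ≤ ENNReal.ofReal (C₀ * r ^ n)

/-- A (closed, axis-parallel) cube with center in the support of `μ` and positive
side length. -/
structure CubeOf (μ : MeasureTheory.Measure (Euc d)) where
  c : Euc d
  ℓ : ℝ
  ℓ_pos : 0 < ℓ
  c_mem : c ∈ measSupp μ

namespace CubeOf

variable {μ : MeasureTheory.Measure (Euc d)}

/-- The set of points of a cube. -/
def set (Q : CubeOf μ) : Set (Euc d) := {y | ∀ i, |y i - Q.c i| ≤ Q.ℓ / 2}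

/-- The concentric dilation `aQ` of a cube, as a set. -/
def dil (Q : CubeOf μ) (a : ℝ) : Set (Euc d) := {y | ∀ i, |y i - Q.c i| ≤ a * Q.ℓ / 2}

/-- The cube `2^k Q`. -/
def pow2 (Q : CubeOf μ) (k : ℕ) : CubeOf μ :=
  ⟨Q.c, 2 ^ k * Q.ℓ, mul_pos (by positivity) Q.ℓ_pos, Q.c_mem⟩

/-- The cube `6^k Q`. -/
def pow6 (Q : CubeOf μ) (k : ℕ) : CubeOf μ :=
  ⟨Q.c, 6 ^ k * Q.ℓ, mul_pos (by positivity) Q.ℓ_pos, Q.c_mem⟩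

end CubeOf

/-- `(α,β)`-doubling cube: `μ(αQ) ≤ β μ(Q)`. -/
def IsDoubling (μ : MeasureTheory.Measure (Euc d)) (α β : ℝ) (Q : CubeOf μ) : Prop :=
  μ (Q.dil α) ≤ ENNReal.ofReal β * μ Q.set

/-- `N_{Q,R}`: the first integer `k ≥ 1` such that `l(2^k Q) ≥ l(R)`. -/
def NQR {μ : MeasureTheory.Measure (Euc d)} (Q R : CubeOf μ) : ℕ :=
  sInf {k : ℕ | 1 ≤ k ∧ R.ℓ ≤ 2 ^ k * Q.ℓ}

/-- The coefficient `K_{Q,R} = 1 + ∑_{k=1}^{N_{Q,R}} μ(2^k Q)/l(2^k Q)^n`. -/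
def Kcoef {μ : MeasureTheory.Measure (Euc d)} (n : ℕ) (Q R : CubeOf μ) : ℝ :=
  1 + ∑ k ∈ Finset.Icc 1 (NQR Q R), (μ ((Q.pow2 k).set)).toReal / ((2 ^ k * Q.ℓ) ^ n)

/-- The smallest `N ≥ 0` such that `2^N Q` is `(2,βd)`-doubling. -/
def tildeIdx (μ : MeasureTheory.Measure (Euc d)) (βd : ℝ) (Q : CubeOf μ) : ℕ :=
  sInf {N : ℕ | IsDoubling μ 2 βd (Q.pow2 N)}

/-- The cube `Q̃`: the smallest cube `2^N Q`, `N ≥ 0`, which is `(2,βd)`-doubling. -/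
def CubeOf.tilde {μ : MeasureTheory.Measure (Euc d)} (Q : CubeOf μ) (βd : ℝ) : CubeOf μ :=
  Q.pow2 (tildeIdx μ βd Q)

/-- The mean `m_Q f` of `f` over the cube `Q` with respect to `μ`. -/
def mQ (μ : MeasureTheory.Measure (Euc d)) (Q : CubeOf μ) (f : Euc d → ℝ) : ℝ :=
  ⨍ x in Q.set, f x ∂μ

/-- For `μ`-a.e. `x` there are `(2,βd)`-doubling cubes centered at `x` of arbitrarily
small side length. -/
def SmallDoublingAE (μ : MeasureTheory.Measure (Euc d)) (βd : ℝ) : Prop :=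
  ∀ᵐ x ∂μ, ∀ ℓ₀ : ℝ, 0 < ℓ₀ → ∃ Q : CubeOf μ, Q.c = x ∧ Q.ℓ < ℓ₀ ∧ IsDoubling μ 2 βd Q

/-- `C` is an admissible constant in the definition of the `RBMO(μ)` norm of `f`. -/
def RBMOBoundWith (μ : MeasureTheory.Measure (Euc d)) (n : ℕ) (βd : ℝ)
    (f : Euc d → ℝ) (C : ℝ≥0∞) : Prop :=
  (∀ Q : CubeOf μ,
    ∫⁻ x in Q.set, ENNReal.ofReal |f x - mQ μ (Q.tilde βd) f| ∂μ ≤ C * μ (Q.dil 2)) ∧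
  (∀ Q R : CubeOf μ, Q.set ⊆ R.set → IsDoubling μ 2 βd Q → IsDoubling μ 2 βd R →
    ENNReal.ofReal |mQ μ Q f - mQ μ R f| ≤ C * ENNReal.ofReal (Kcoef n Q R))

/-- The `RBMO(μ)` norm `‖f‖_*` (with value `∞` if `f ∉ RBMO(μ)`). -/
def rbmoNorm (μ : MeasureTheory.Measure (Euc d)) (n : ℕ) (βd : ℝ) (f : Euc d → ℝ) : ℝ≥0∞ :=
  sInf {C | RBMOBoundWith μ n βd f C}

/-- The conditions defining `‖f‖_{**,(ρ)}`, for a given family of numbers `fQ`. -/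
def StarStarBoundWith (μ : MeasureTheory.Measure (Euc d)) (n : ℕ) (ρ : ℝ)
    (f : Euc d → ℝ) (fQ : CubeOf μ → ℝ) (C : ℝ≥0∞) : Prop :=
  (∀ Q : CubeOf μ, ∫⁻ x in Q.set, ENNReal.ofReal |f x - fQ Q| ∂μ ≤ C * μ (Q.dil ρ)) ∧
  (∀ Q R : CubeOf μ, Q.set ⊆ R.set →
    ENNReal.ofReal |fQ Q - fQ R| ≤ C * ENNReal.ofReal (Kcoef n Q R))

/-- The norm `‖f‖_{**,(ρ)}`. -/
def starStarNorm (μ : MeasureTheory.Measure (Euc d)) (n : ℕ) (ρ : ℝ) (f : Euc d → ℝ) : ℝ≥0∞ :=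
  sInf {C | ∃ fQ : CubeOf μ → ℝ, StarStarBoundWith μ n ρ f fQ C}

end

noncomputable section

variable {d : ℕ}

/-- The conditions defining the `RBMO^p(μ)` norm. -/
def RBMOpBoundWith (μ : MeasureTheory.Measure (Euc d)) (n : ℕ) (βd : ℝ) (p : ℝ)
    (f : Euc d → ℝ) (C : ℝ≥0∞) : Prop :=
  (∀ Q : CubeOf μ,
    ∫⁻ x in Q.set, ENNReal.ofReal |f x - mQ μ (Q.tilde βd) f| ^ p ∂μ ≤ C ^ p * μ (Q.dil 2)) ∧
  (∀ Q R : CubeOf μ, Q.set ⊆ R.set → IsDoubling μ 2 βd Q → IsDoubling μ 2 βd R →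
    ENNReal.ofReal |mQ μ Q f - mQ μ R f| ≤ C * ENNReal.ofReal (Kcoef n Q R))

/-- The `RBMO^p(μ)` norm `‖f‖_{*,p}`. -/
def rbmoPNorm (μ : MeasureTheory.Measure (Euc d)) (n : ℕ) (βd : ℝ) (p : ℝ)
    (f : Euc d → ℝ) : ℝ≥0∞ :=
  sInf {C | RBMOpBoundWith μ n βd p f C}

/-- Condition (b) of Lemma `fifi` of the paper, with constant `Cb`. -/
def CondB (μ : MeasureTheory.Measure (Euc d)) (n : ℕ) (ρ : ℝ)
    (f : Euc d → ℝ) (Cb : ℝ≥0∞) : Prop :=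
  (∀ Q : CubeOf μ, ∫⁻ x in Q.set, ENNReal.ofReal |f x - mQ μ Q f| ∂μ ≤ Cb * μ (Q.dil ρ)) ∧
  (∀ Q R : CubeOf μ, Q.set ⊆ R.set →
    ENNReal.ofReal |mQ μ Q f - mQ μ R f| ≤
      Cb * ENNReal.ofReal (Kcoef n Q R) * (μ (Q.dil ρ) / μ Q.set + μ (R.dil ρ) / μ R.set))

/-- Condition (c) of Lemma `fifi` of the paper, with constant `Cc`. -/
def CondC (μ : MeasureTheory.Measure (Euc d)) (n : ℕ) (βd : ℝ)
    (f : Euc d → ℝ) (Cc : ℝ≥0∞) : Prop :=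
  (∀ Q : CubeOf μ, IsDoubling μ 2 βd Q →
    ∫⁻ x in Q.set, ENNReal.ofReal |f x - mQ μ Q f| ∂μ ≤ Cc * μ Q.set) ∧
  (∀ Q R : CubeOf μ, Q.set ⊆ R.set → IsDoubling μ 2 βd Q → IsDoubling μ 2 βd R →
    ENNReal.ofReal |mQ μ Q f - mQ μ R f| ≤ Cc * ENNReal.ofReal (Kcoef n Q R))

/-- The conditions defining the norm `‖f‖_∘`, relative to a choice `αQ` of minimizers. -/
def CircBoundWith (μ : MeasureTheory.Measure (Euc d)) (n : ℕ) (βd : ℝ)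
    (f : Euc d → ℝ) (αQ : CubeOf μ → ℝ) (C : ℝ≥0∞) : Prop :=
  (∀ Q : CubeOf μ,
    ∫⁻ x in Q.set, ENNReal.ofReal |f x - αQ (Q.tilde βd)| ∂μ ≤ C * μ (Q.dil 2)) ∧
  (∀ Q R : CubeOf μ, Q.set ⊆ R.set → IsDoubling μ 2 βd Q → IsDoubling μ 2 βd R →
    ENNReal.ofReal |αQ Q - αQ R| ≤ C * ENNReal.ofReal (Kcoef n Q R))

/-- The norm `‖f‖_∘`, relative to a choice `αQ` of minimizers. -/
def circNorm (μ : MeasureTheory.Measure (Euc d)) (n : ℕ) (βd : ℝ)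
    (f : Euc d → ℝ) (αQ : CubeOf μ → ℝ) : ℝ≥0∞ :=
  sInf {C | CircBoundWith μ n βd f αQ C}

/-- An atomic block: a function supported on a cube `R`, with zero integral, of the
form `b = ∑ λⱼ aⱼ` with `aⱼ` supported on cubes `Qⱼ ⊆ R` and
`‖aⱼ‖_{L∞(μ)} ≤ (μ(2Qⱼ) K_{Qⱼ,R})⁻¹`. -/
structure AtomicBlock (μ : MeasureTheory.Measure (Euc d)) (n : ℕ) where
  b : Euc d → ℝ
  R : CubeOf μ
  lam : ℕ → ℝ
  a : ℕ → Euc d → ℝ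
  Qj : ℕ → CubeOf μ
  integrable : MeasureTheory.Integrable b μ
  supp_b : ∀ x ∉ R.set, b x = 0
  int_zero : ∫ x, b x ∂μ = 0
  Qj_sub : ∀ j, (Qj j).set ⊆ R.set
  a_supp : ∀ j, ∀ x ∉ (Qj j).set, a j x = 0
  a_meas : ∀ j, MeasureTheory.AEStronglyMeasurable (a j) μ
  a_bound : ∀ j, MeasureTheory.eLpNorm (a j) ⊤ μ ≤
    (μ ((Qj j).dil 2) * ENNReal.ofReal (Kcoef n (Qj j) R))⁻¹
  lam_summable : Summable fun j => |lam j|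
  b_eq : ∀ᵐ x ∂μ, HasSum (fun j => lam j * a j x) (b x)

/-- `|b|_{H^{1,∞}_atb(μ)} = ∑ⱼ |λⱼ|` for the given decomposition. -/
def AtomicBlock.size {μ : MeasureTheory.Measure (Euc d)} {n : ℕ}
    (B : AtomicBlock μ n) : ℝ :=
  ∑' j, |B.lam j|

/-- The `H^{1,∞}_atb(μ)` norm (with value `∞` outside the space). -/
def hatbNorm (μ : MeasureTheory.Measure (Euc d)) (n : ℕ) (f : Euc d → ℝ) : ℝ≥0∞ :=
  sInf {t : ℝ≥0∞ | ∃ B : ℕ → AtomicBlock μ n,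
    (∀ᵐ x ∂μ, HasSum (fun i => (B i).b x) (f x)) ∧
    t = ∑' i, ENNReal.ofReal ((B i).size)}

/-- A `p`-atomic block: like an atomic block, but with the size condition
`‖aⱼ‖_{L^p(μ)} ≤ μ(2Qⱼ)^{1/p-1} K_{Qⱼ,R}⁻¹`. -/
structure PAtomicBlock (μ : MeasureTheory.Measure (Euc d)) (n : ℕ) (p : ℝ) where
  b : Euc d → ℝ
  R : CubeOf μ
  lam : ℕ → ℝ
  a : ℕ → Euc d → ℝ
  Qj : ℕ → CubeOf μ
  integrable : MeasureTheory.Integrable b μ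
  supp_b : ∀ x ∉ R.set, b x = 0
  int_zero : ∫ x, b x ∂μ = 0
  Qj_sub : ∀ j, (Qj j).set ⊆ R.set
  a_supp : ∀ j, ∀ x ∉ (Qj j).set, a j x = 0
  a_meas : ∀ j, MeasureTheory.AEStronglyMeasurable (a j) μ
  a_bound : ∀ j, MeasureTheory.eLpNorm (a j) (ENNReal.ofReal p) μ ≤
    μ ((Qj j).dil 2) ^ (1 / p - 1) * (ENNReal.ofReal (Kcoef n (Qj j) R))⁻¹
  lam_summable : Summable fun j => |lam j|
  b_eq : ∀ᵐ x ∂μ, HasSum (fun j => lam j * a j x) (b x)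

/-- `|b|_{H^{1,p}_atb(μ)} = ∑ⱼ |λⱼ|` for the given decomposition. -/
def PAtomicBlock.size {μ : MeasureTheory.Measure (Euc d)} {n : ℕ} {p : ℝ}
    (B : PAtomicBlock μ n p) : ℝ :=
  ∑' j, |B.lam j|

/-- The `H^{1,p}_atb(μ)` norm (with value `∞` outside the space). -/
def hatbPNorm (μ : MeasureTheory.Measure (Euc d)) (n : ℕ) (p : ℝ) (f : Euc d → ℝ) : ℝ≥0∞ :=
  sInf {t : ℝ≥0∞ | ∃ B : ℕ → PAtomicBlock μ n p,
    (∀ᵐ x ∂μ, HasSum (fun i => (B i).b x) (f x)) ∧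
    t = ∑' i, ENNReal.ofReal ((B i).size)}

/-- A Calderón–Zygmund kernel of dimension `n`, with constant `Ck` and Hölder
exponent `δ`. -/
def CZKernelBound (n : ℕ) (k : Euc d → Euc d → ℝ) (Ck δ : ℝ) : Prop :=
  (∀ x y : Euc d, x ≠ y → |k x y| ≤ Ck / dist x y ^ (n : ℝ)) ∧
  (∀ x x' y : Euc d, x ≠ y → dist x x' ≤ dist x y / 2 →
    |k x y - k x' y| + |k y x - k y x'| ≤ Ck * dist x x' ^ δ / dist x y ^ ((n : ℝ) + δ))

/-- The truncated operator `T_ε f(x) = ∫_{|x-y|>ε} k(x,y) f(y) dμ(y)`. -/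
def trunc (μ : MeasureTheory.Measure (Euc d)) (k : Euc d → Euc d → ℝ) (ε : ℝ)
    (f : Euc d → ℝ) (x : Euc d) : ℝ :=
  ∫ y in {y | ε < dist x y}, k x y * f y ∂μ

/-- The non-centered doubling maximal operator `N`. -/
def Nop (μ : MeasureTheory.Measure (Euc d)) (βd : ℝ) (f : Euc d → ℝ) (x : Euc d) : ℝ≥0∞ :=
  ⨆ (Q : CubeOf μ) (_ : x ∈ Q.set) (_ : IsDoubling μ 2 βd Q),
    (∫⁻ y in Q.set, ENNReal.ofReal |f y| ∂μ) / μ Q.set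

/-- The sharp maximal operator `M^♯`. -/
def Msharp (μ : MeasureTheory.Measure (Euc d)) (n : ℕ) (βd : ℝ)
    (f : Euc d → ℝ) (x : Euc d) : ℝ≥0∞ :=
  (⨆ (Q : CubeOf μ) (_ : x ∈ Q.set),
    (∫⁻ y in Q.set, ENNReal.ofReal |f y - mQ μ (Q.tilde βd) f| ∂μ) / μ (Q.dil (3/2))) +
  ⨆ (Q : CubeOf μ) (R : CubeOf μ) (_ : x ∈ Q.set) (_ : Q.set ⊆ R.set)
      (_ : IsDoubling μ 2 βd Q) (_ : IsDoubling μ 2 βd R),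
    ENNReal.ofReal (|mQ μ Q f - mQ μ R f| / Kcoef n Q R)

/-- The weight functions `w_i = χ_{Q_i} / ∑_k χ_{Q_k}` of the Calderón–Zygmund
decomposition. -/
def czWeight {μ : MeasureTheory.Measure (Euc d)} (J : Finset ℕ) (Q : ℕ → CubeOf μ)
    (i : ℕ) (x : Euc d) : ℝ :=
  Set.indicator (Q i).set
    (fun y => (((J.filter fun kk => y ∈ (Q kk).set).card : ℝ))⁻¹) x

/-- The smallest `(6,6^{n+1})`-doubling cube of the form `6^k Q`, `k ≥ 1`. -/
def smallest6Doubling (μ : MeasureTheory.Measure (Euc d)) (n : ℕ) (Q : CubeOf μ) : CubeOf μ :=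
  Q.pow6 (sInf {k : ℕ | 1 ≤ k ∧ IsDoubling μ 6 (6 ^ (n + 1)) (Q.pow6 k)})

end


namespace Tolsa21

open MeasureTheory

variable {d : ℕ} {μ : MeasureTheory.Measure (Euc d)} {n : ℕ} {C₀ : ℝ}

/-- The `k`-th term of the sum defining `Kcoef`. -/
noncomputable def term (μ : MeasureTheory.Measure (Euc d)) (n : ℕ) (Q : CubeOf μ) (k : ℕ) : ℝ :=
  (μ ((Q.pow2 k).set)).toReal / ((2 ^ k * Q.ℓ) ^ n)

lemma Kcoef_eq (Q R : CubeOf μ) :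
    Kcoef n Q R = 1 + ∑ k ∈ Finset.Icc 1 (NQR Q R), term μ n Q k := rfl

lemma term_nonneg (Q : CubeOf μ) (k : ℕ) : 0 ≤ term μ n Q k := by
  apply div_nonneg ENNReal.toReal_nonneg
  have := Q.ℓ_pos
  positivity

lemma one_le_Kcoef (Q R : CubeOf μ) : 1 ≤ Kcoef n Q R := by
  have := Finset.sum_nonneg (fun k (_ : k ∈ Finset.Icc 1 (NQR Q R)) => term_nonneg (n := n) Q k)
  rw [Kcoef_eq]; linarith

lemma cube_subset_ball (hd : 1 ≤ d) (P : CubeOf μ) :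
    P.set ⊆ Metric.ball P.c (Real.sqrt d * P.ℓ) := by
  intro y hy
  rw [Metric.mem_ball, EuclideanSpace.dist_eq]
  have h1 : ∑ i, dist (y i) (P.c i) ^ 2 ≤ (d : ℝ) * (P.ℓ / 2) ^ 2 := by
    calc ∑ i, dist (y i) (P.c i) ^ 2 ≤ ∑ _i : Fin d, (P.ℓ / 2) ^ 2 := by
          apply Finset.sum_le_sum
          intro i _
          have := hy i
          rw [Real.dist_eq]
          have h0 : (0:ℝ) ≤ |y i - P.c i| := abs_nonneg _
          nlinarith
      _ = (d : ℝ) * (P.ℓ / 2) ^ 2 := by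
          rw [Finset.sum_const, Finset.card_univ, Fintype.card_fin, nsmul_eq_mul]
  have hd0 : (0:ℝ) ≤ d := Nat.cast_nonneg d
  have hsq : Real.sqrt (∑ i, dist (y i) (P.c i) ^ 2) ≤ Real.sqrt d * (P.ℓ / 2) := by
    calc Real.sqrt (∑ i, dist (y i) (P.c i) ^ 2) ≤ Real.sqrt ((d : ℝ) * (P.ℓ / 2) ^ 2) :=
          Real.sqrt_le_sqrt h1
      _ = Real.sqrt d * (P.ℓ / 2) := by
          have := P.ℓ_pos
          rw [Real.sqrt_mul hd0, Real.sqrt_sq (by positivity : (0:ℝ) ≤ P.ℓ / 2)]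
  have hsd : 0 < Real.sqrt d := Real.sqrt_pos.mpr (by exact_mod_cast hd)
  have := P.ℓ_pos
  calc Real.sqrt (∑ i, dist (y i) (P.c i) ^ 2) ≤ Real.sqrt d * (P.ℓ / 2) := hsq
    _ < Real.sqrt d * P.ℓ := by nlinarith

lemma mu_cube_le (hd : 1 ≤ d) (hg : GrowthBound μ n C₀) (P : CubeOf μ) :
    μ P.set ≤ ENNReal.ofReal (C₀ * (Real.sqrt d * P.ℓ) ^ n) := by
  have hsd : 0 < Real.sqrt d := Real.sqrt_pos.mpr (by exact_mod_cast hd)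
  exact (measure_mono (cube_subset_ball hd P)).trans
    (hg P.c _ (mul_pos hsd P.ℓ_pos))

lemma mu_cube_ne_top (hd : 1 ≤ d) (hg : GrowthBound μ n C₀) (P : CubeOf μ) :
    μ P.set ≠ ⊤ :=
  ((mu_cube_le hd hg P).trans_lt ENNReal.ofReal_lt_top).ne

lemma mu_toReal_le (hd : 1 ≤ d) (hC₀ : 0 < C₀) (hg : GrowthBound μ n C₀) (P : CubeOf μ) :
    (μ P.set).toReal ≤ C₀ * (Real.sqrt d * P.ℓ) ^ n := by
  apply ENNReal.toReal_le_of_le_ofReal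
  · have hsd : 0 < Real.sqrt d := Real.sqrt_pos.mpr (by exact_mod_cast hd)
    have := P.ℓ_pos
    positivity
  · exact mu_cube_le hd hg P

lemma term_le (hd : 1 ≤ d) (hC₀ : 0 < C₀) (hg : GrowthBound μ n C₀) (Q : CubeOf μ) (k : ℕ) :
    term μ n Q k ≤ C₀ * Real.sqrt d ^ n := by
  have h := mu_toReal_le hd hC₀ hg (Q.pow2 k)
  have hpos : (0:ℝ) < (2 ^ k * Q.ℓ) ^ n := by
    have := Q.ℓ_pos; positivity
  rw [term, div_le_iff₀ hpos]
  calc (μ ((Q.pow2 k).set)).toReal ≤ C₀ * (Real.sqrt d * (2 ^ k * Q.ℓ)) ^ n := h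
    _ = C₀ * Real.sqrt d ^ n * (2 ^ k * Q.ℓ) ^ n := by rw [mul_pow]; ring

lemma NQR_mem (Q R : CubeOf μ) : 1 ≤ NQR Q R ∧ R.ℓ ≤ 2 ^ NQR Q R * Q.ℓ := by
  have hne : {k : ℕ | 1 ≤ k ∧ R.ℓ ≤ 2 ^ k * Q.ℓ}.Nonempty := by
    obtain ⟨k, hk⟩ := pow_unbounded_of_one_lt (R.ℓ / Q.ℓ) (one_lt_two (α := ℝ))
    refine ⟨max k 1, le_max_right _ _, ?_⟩
    have h2 : R.ℓ / Q.ℓ < 2 ^ max k 1 :=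
      hk.trans_le (pow_le_pow_right₀ one_le_two (le_max_left _ _))
    rw [div_lt_iff₀ Q.ℓ_pos] at h2
    linarith
  exact Nat.sInf_mem hne

lemma NQR_le {Q R : CubeOf μ} {k : ℕ} (h1 : 1 ≤ k) (h2 : R.ℓ ≤ 2 ^ k * Q.ℓ) :
    NQR Q R ≤ k := Nat.sInf_le ⟨h1, h2⟩

lemma lt_NQR {Q R : CubeOf μ} {k : ℕ} (h1 : 1 ≤ k) (h : k < NQR Q R) :
    2 ^ k * Q.ℓ < R.ℓ := by
  have h2 := Nat.notMem_of_lt_sInf (s := {k : ℕ | 1 ≤ k ∧ R.ℓ ≤ 2 ^ k * Q.ℓ}) h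
  simp only [Set.mem_setOf_eq, not_and, not_le] at h2
  exact h2 h1

lemma NQR_pow2 {Q : CubeOf μ} {N : ℕ} (hN : 1 ≤ N) : NQR Q (Q.pow2 N) = N := by
  have hle : NQR Q (Q.pow2 N) ≤ N := NQR_le hN (le_refl _)
  refine le_antisymm hle ?_
  have h2 := (NQR_mem Q (Q.pow2 N)).2
  have h3 : (2:ℝ) ^ N * Q.ℓ ≤ 2 ^ NQR Q (Q.pow2 N) * Q.ℓ := h2
  have h4 : (2:ℝ) ^ N ≤ 2 ^ NQR Q (Q.pow2 N) := (mul_le_mul_iff_of_pos_right Q.ℓ_pos).mp h3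
  exact (pow_le_pow_iff_right₀ one_lt_two).mp h4

lemma center_mem_set (Q : CubeOf μ) : Q.c ∈ Q.set := by
  intro i
  simp only [sub_self, abs_zero]
  linarith [Q.ℓ_pos]

lemma center_close {Q R : CubeOf μ} (h : Q.set ⊆ R.set) (i : Fin d) :
    |Q.c i - R.c i| ≤ R.ℓ / 2 := h (center_mem_set Q) i

lemma ell_le (hd : 1 ≤ d) {Q R : CubeOf μ} (h : Q.set ⊆ R.set) : Q.ℓ ≤ R.ℓ := by
  set i0 : Fin d := ⟨0, hd⟩
  set y : Euc d := WithLp.toLp 2 (fun j => Q.c j + if j = i0 then Q.ℓ / 2 else 0) with hy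
  set z : Euc d := WithLp.toLp 2 (fun j => Q.c j + if j = i0 then -(Q.ℓ / 2) else 0) with hz
  have hyQ : y ∈ Q.set := by
    intro j
    show |Q.c j + (if j = i0 then Q.ℓ / 2 else 0) - Q.c j| ≤ Q.ℓ / 2
    have hl := Q.ℓ_pos
    rcases eq_or_ne j i0 with hj | hj
    · rw [hj, if_pos rfl, add_sub_cancel_left, abs_of_nonneg (by linarith)]
    · simp only [if_neg hj]
      rw [add_zero, sub_self, abs_zero]
      linarith
  have hzQ : z ∈ Q.set := by
    intro j
    show |Q.c j + (if j = i0 then -(Q.ℓ / 2) else 0) - Q.c j| ≤ Q.ℓ / 2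
    have hl := Q.ℓ_pos
    rcases eq_or_ne j i0 with hj | hj
    · rw [hj, if_pos rfl, add_sub_cancel_left, abs_neg, abs_of_nonneg (by linarith)]
    · simp only [if_neg hj]
      rw [add_zero, sub_self, abs_zero]
      linarith
  have hyR := h hyQ i0
  have hzR := h hzQ i0
  have hyv : y i0 = Q.c i0 + Q.ℓ / 2 := by simp [hy]
  have hzv : z i0 = Q.c i0 - Q.ℓ / 2 := by simp [hz]; ring
  rw [hyv] at hyR
  rw [hzv] at hzR
  rw [abs_le] at hyR hzR
  linarith [hyR.1, hyR.2, hzR.1, hzR.2]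

/-- `midx Y t`: first `m ≥ 1` with `2^m l(Y) ≥ t`. -/
noncomputable def midx (Y : CubeOf μ) (t : ℝ) : ℕ := sInf {m : ℕ | 1 ≤ m ∧ t ≤ 2 ^ m * Y.ℓ}

lemma midx_mem (Y : CubeOf μ) (t : ℝ) : 1 ≤ midx Y t ∧ t ≤ 2 ^ midx Y t * Y.ℓ := by
  have hne : {m : ℕ | 1 ≤ m ∧ t ≤ 2 ^ m * Y.ℓ}.Nonempty := by
    obtain ⟨k, hk⟩ := pow_unbounded_of_one_lt (t / Y.ℓ) (one_lt_two (α := ℝ))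
    refine ⟨max k 1, le_max_right _ _, ?_⟩
    have h2 : t / Y.ℓ < 2 ^ max k 1 :=
      hk.trans_le (pow_le_pow_right₀ one_le_two (le_max_left _ _))
    rw [div_lt_iff₀ Y.ℓ_pos] at h2
    linarith
  exact Nat.sInf_mem hne

lemma midx_le {Y : CubeOf μ} {t : ℝ} {B : ℕ} (hB : 1 ≤ B) (h : t ≤ 2 ^ B * Y.ℓ) :
    midx Y t ≤ B := Nat.sInf_le ⟨hB, h⟩

lemma midx_lt_two_mul {Y : CubeOf μ} {t : ℝ} (h : 2 * Y.ℓ ≤ t) :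
    2 ^ midx Y t * Y.ℓ < 2 * t := by
  have hY := Y.ℓ_pos
  have ht : 0 < t := lt_of_lt_of_le (by linarith) h
  rcases eq_or_lt_of_le (midx_mem Y t).1 with heq | hlt
  · rw [← heq, pow_one]
    linarith
  · have h2 := Nat.notMem_of_lt_sInf
      (s := {m : ℕ | 1 ≤ m ∧ t ≤ 2 ^ m * Y.ℓ}) (m := midx Y t - 1)
      (show midx Y t - 1 < midx Y t by omega)
    simp only [Set.mem_setOf_eq, not_and, not_le] at h2
    have h3 : 2 ^ (midx Y t - 1) * Y.ℓ < t := h2 (by omega)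
    have h4 : (2:ℝ) ^ midx Y t = 2 * 2 ^ (midx Y t - 1) := by
      rw [← pow_succ']
      congr 1
      omega
    rw [h4]
    nlinarith

lemma midx_strict {Y : CubeOf μ} {t t' : ℝ} (h1 : 2 * Y.ℓ ≤ t) (h2 : 2 * t ≤ t') :
    midx Y t < midx Y t' := by
  have ha := midx_lt_two_mul h1
  have hb := (midx_mem Y t').2
  have hc : (2:ℝ) ^ midx Y t * Y.ℓ < 2 ^ midx Y t' * Y.ℓ := by linarith
  have hd' : (2:ℝ) ^ midx Y t < 2 ^ midx Y t' := (mul_lt_mul_iff_of_pos_right Y.ℓ_pos).mp hc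
  exact (pow_lt_pow_iff_right₀ one_lt_two).mp hd'

lemma dil_two_eq (Q : CubeOf μ) (k : ℕ) : (Q.pow2 k).dil 2 = (Q.pow2 (k + 1)).set := by
  have hb : 2 * (2 ^ k * Q.ℓ) / 2 = 2 ^ (k + 1) * Q.ℓ / 2 := by ring
  ext y
  simp only [CubeOf.dil, CubeOf.set, CubeOf.pow2, Set.mem_setOf_eq, hb]

lemma pow2_zero_set (Q : CubeOf μ) : (Q.pow2 0).set = Q.set := by
  have hb : 2 ^ (0:ℕ) * Q.ℓ / 2 = Q.ℓ / 2 := by norm_num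
  ext y
  simp only [CubeOf.set, CubeOf.pow2, Set.mem_setOf_eq, hb]

lemma sum_transfer {f g : ℕ → ℝ} {s t : Finset ℕ} {m : ℕ → ℕ} {c : ℝ} (hc : 0 ≤ c)
    (hinj : ∀ x ∈ s, ∀ y ∈ s, m x = m y → x = y) (hmap : ∀ k ∈ s, m k ∈ t)
    (hfg : ∀ k ∈ s, f k ≤ c * g (m k)) (hg0 : ∀ j, 0 ≤ g j) :
    ∑ k ∈ s, f k ≤ c * ∑ j ∈ t, g j := by
  calc ∑ k ∈ s, f k ≤ ∑ k ∈ s, c * g (m k) := Finset.sum_le_sum hfg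
    _ = c * ∑ k ∈ s, g (m k) := by rw [Finset.mul_sum]
    _ = c * ∑ j ∈ s.image m, g j := by rw [Finset.sum_image hinj]
    _ ≤ c * ∑ j ∈ t, g j := by
        apply mul_le_mul_of_nonneg_left _ hc
        apply Finset.sum_le_sum_of_subset_of_nonneg
        · intro j hj
          obtain ⟨k, hk, rfl⟩ := Finset.mem_image.mp hj
          exact hmap k hk
        · exact fun j _ _ => hg0 j

lemma transfer_subset {X Y : CubeOf μ} {k : ℕ}
    (hcent : ∀ i, |X.c i - Y.c i| ≤ 2 ^ k * X.ℓ / 2) :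
    (X.pow2 k).set ⊆ (Y.pow2 (midx Y (2 ^ (k + 1) * X.ℓ))).set := by
  intro y hy i
  have h1 : |y i - X.c i| ≤ 2 ^ k * X.ℓ / 2 := hy i
  have h2 := (midx_mem Y (2 ^ (k + 1) * X.ℓ)).2
  have hX := X.ℓ_pos
  show |y i - Y.c i| ≤ 2 ^ midx Y (2 ^ (k + 1) * X.ℓ) * Y.ℓ / 2
  have h3 : |y i - Y.c i| ≤ |y i - X.c i| + |X.c i - Y.c i| := abs_sub_le _ _ _
  have hp' : (2:ℝ) ^ (k + 1) * X.ℓ = 2 * (2 ^ k * X.ℓ) := by ring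
  linarith [hcent i, h2]

lemma transfer_term (hd : 1 ≤ d) (hC₀ : 0 < C₀) (hg : GrowthBound μ n C₀)
    {X Y : CubeOf μ} {k : ℕ}
    (hcent : ∀ i, |X.c i - Y.c i| ≤ 2 ^ k * X.ℓ / 2)
    (hside : 2 * Y.ℓ ≤ 2 ^ (k + 1) * X.ℓ) :
    term μ n X k ≤ 4 ^ n * term μ n Y (midx Y (2 ^ (k + 1) * X.ℓ)) := by
  set m := midx Y (2 ^ (k + 1) * X.ℓ) with hm
  have hX := X.ℓ_pos
  have hY := Y.ℓ_pos
  have hmono : (μ ((X.pow2 k).set)).toReal ≤ (μ ((Y.pow2 m).set)).toReal :=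
    ENNReal.toReal_mono (mu_cube_ne_top hd hg _) (measure_mono (transfer_subset hcent))
  have hlt : 2 ^ m * Y.ℓ < 2 * (2 ^ (k + 1) * X.ℓ) := midx_lt_two_mul hside
  have h4 : 2 ^ m * Y.ℓ ≤ 4 * (2 ^ k * X.ℓ) := by
    have hp : (2:ℝ) * (2 ^ (k + 1) * X.ℓ) = 4 * (2 ^ k * X.ℓ) := by ring
    linarith [hp ▸ hlt]
  have hbn : ((2:ℝ) ^ m * Y.ℓ) ^ n ≤ 4 ^ n * ((2:ℝ) ^ k * X.ℓ) ^ n := by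
    calc ((2:ℝ) ^ m * Y.ℓ) ^ n ≤ (4 * (2 ^ k * X.ℓ)) ^ n :=
          pow_le_pow_left₀ (by positivity) h4 n
      _ = 4 ^ n * ((2:ℝ) ^ k * X.ℓ) ^ n := mul_pow _ _ _
  rw [term, term, mul_div_assoc' (4 ^ n), div_le_div_iff₀ (by positivity) (by positivity)]
  have ha : (0:ℝ) ≤ (μ ((X.pow2 k).set)).toReal := ENNReal.toReal_nonneg
  have ha' : (0:ℝ) ≤ (μ ((Y.pow2 m).set)).toReal := ENNReal.toReal_nonneg
  nlinarith [mul_le_mul_of_nonneg_left hbn ha,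
    mul_le_mul_of_nonneg_right hmono (by positivity : (0:ℝ) ≤ 4 ^ n * ((2:ℝ) ^ k * X.ℓ) ^ n)]

lemma pow_succ_NQR_le {U V : CubeOf μ} (hℓ : U.ℓ ≤ V.ℓ) {k : ℕ} (hk : k ≤ NQR U V) :
    2 ^ (k + 1) * U.ℓ ≤ 4 * V.ℓ := by
  have hU := U.ℓ_pos
  rcases Nat.lt_or_ge (NQR U V) 2 with h | h
  · have hk2 : k + 1 ≤ 2 := by omega
    have h2 : (2:ℝ) ^ (k + 1) ≤ 2 ^ 2 := pow_le_pow_right₀ one_le_two hk2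
    nlinarith
  · have h1 : 2 ^ (NQR U V - 1) * U.ℓ < V.ℓ := lt_NQR (by omega) (by omega)
    have h2 : (2:ℝ) ^ (k + 1) ≤ 2 ^ (NQR U V + 1) := pow_le_pow_right₀ one_le_two (by omega)
    have h3 : (2:ℝ) ^ (NQR U V + 1) = 4 * 2 ^ (NQR U V - 1) := by
      rw [show NQR U V + 1 = (NQR U V - 1) + 2 by omega, pow_add]
      ring
    nlinarith

lemma sum_pow_le {q : ℝ} (h0 : 0 ≤ q) (h1 : q < 1) (s : Finset ℕ) :
    ∑ j ∈ s, q ^ j ≤ (1 - q)⁻¹ := by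
  have h := Summable.sum_le_tsum s (fun j (_ : j ∉ s) => pow_nonneg h0 j)
    (summable_geometric_of_lt_one h0 h1)
  rwa [tsum_geometric_of_lt_one h0 h1] at h

end Tolsa21

/-- Properties of the coefficients `K_{Q,R}` (Lemma 2.1 of the paper). -/
theorem statement0 (d n : ℕ) (hn : 1 ≤ n) (hnd : n ≤ d) (C₀ : ℝ) (hC₀ : 0 < C₀) :
    (∃ C : ℝ, 0 < C ∧ ∀ μ : MeasureTheory.Measure (Euc d), GrowthBound μ n C₀ →
      ∀ Q R S : CubeOf μ, Q.set ⊆ R.set → R.set ⊆ S.set →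
        Kcoef n Q R ≤ Kcoef n Q S ∧
        Kcoef n R S ≤ C * Kcoef n Q S ∧
        Kcoef n Q S ≤ C * (Kcoef n Q R + Kcoef n R S)) ∧
    (∀ a : ℝ, 1 ≤ a → ∃ C : ℝ, 0 < C ∧ ∀ μ : MeasureTheory.Measure (Euc d),
      GrowthBound μ n C₀ →
      ∀ Q R : CubeOf μ, Q.set ⊆ R.set → R.ℓ ≤ a * Q.ℓ → Kcoef n Q R ≤ C) ∧
    (∀ β : ℝ, (2 : ℝ) ^ n < β → ∃ C : ℝ, 0 < C ∧ ∀ μ : MeasureTheory.Measure (Euc d),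
      GrowthBound μ n C₀ →
      ∀ (Q : CubeOf μ) (N : ℕ), 1 ≤ N →
        (∀ k : ℕ, 1 ≤ k → k < N → ¬ IsDoubling μ 2 β (Q.pow2 k)) →
        Kcoef n Q (Q.pow2 N) ≤ C) ∧
    (∀ β : ℝ, β < (2 : ℝ) ^ n → ∃ C : ℝ, 0 < C ∧ ∀ μ : MeasureTheory.Measure (Euc d),
      GrowthBound μ n C₀ →
      ∀ (Q : CubeOf μ) (N : ℕ), 1 ≤ N →
        (∀ k : ℕ, 1 ≤ k → k ≤ N →
          μ ((Q.pow2 k).set) ≤ ENNReal.ofReal β * μ ((Q.pow2 (k - 1)).set)) →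
        Kcoef n Q (Q.pow2 N) ≤ C) := by
  have hd : 1 ≤ d := hn.trans hnd
  have hsd : 0 < Real.sqrt d := Real.sqrt_pos.mpr (by exact_mod_cast hd)
  set A : ℝ := C₀ * Real.sqrt d ^ n with hA
  have hApos : 0 < A := by positivity
  have h4n : (1:ℝ) ≤ 4 ^ n := one_le_pow₀ (by norm_num : (1:ℝ) ≤ 4)
  have hpow2 : ∀ x : ℕ, 1 ≤ x → (2:ℝ) ≤ 2 ^ x := by
    intro x hx
    calc (2:ℝ) = 2 ^ 1 := (pow_one 2).symm
      _ ≤ 2 ^ x := pow_le_pow_right₀ one_le_two hx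
  refine ⟨⟨1 + 4 ^ n * (1 + 3 * A),
    by nlinarith [mul_pos (lt_of_lt_of_le one_pos h4n) (show (0:ℝ) < 1 + 3 * A by linarith)],
    ?_⟩, ?_, ?_, ?_⟩
  · -- Part 1
    intro μ hg Q R S hQR hRS
    have hQℓ := Q.ℓ_pos
    have hRℓ := R.ℓ_pos
    have hSℓ := S.ℓ_pos
    have hQRℓ : Q.ℓ ≤ R.ℓ := Tolsa21.ell_le hd hQR
    have hRSℓ : R.ℓ ≤ S.ℓ := Tolsa21.ell_le hd hRS
    have hQSℓ : Q.ℓ ≤ S.ℓ := hQRℓ.trans hRSℓ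
    have hN0 := Tolsa21.NQR_mem Q R
    have hN1 := Tolsa21.NQR_mem R S
    have hN2 := Tolsa21.NQR_mem Q S
    have hN02 : NQR Q R ≤ NQR Q S := Tolsa21.NQR_le hN2.1 (hRSℓ.trans hN2.2)
    have claim1 : Kcoef n Q R ≤ Kcoef n Q S := by
      rw [Tolsa21.Kcoef_eq, Tolsa21.Kcoef_eq]
      have h := Finset.sum_le_sum_of_subset_of_nonneg
        (Finset.Icc_subset_Icc_right (a := 1) hN02)
        (fun k _ _ => Tolsa21.term_nonneg (n := n) Q k)
      linarith
    have claim2 : Kcoef n R S ≤ (1 + 4 ^ n * (1 + 3 * A)) * Kcoef n Q S := by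
      have hsideRS : ∀ x : ℕ, 1 ≤ x → 2 * Q.ℓ ≤ 2 ^ (x + 1) * R.ℓ := by
        intro x hx
        have h2 := hpow2 (x + 1) (by omega)
        have h3 := mul_le_mul_of_nonneg_right h2 hRℓ.le
        linarith
      have key : ∑ k ∈ Finset.Icc 1 (NQR R S), Tolsa21.term μ n R k ≤
          4 ^ n * ∑ j ∈ Finset.Icc 1 (NQR Q S + 2), Tolsa21.term μ n Q j := by
        apply Tolsa21.sum_transfer (m := fun k => Tolsa21.midx Q (2 ^ (k + 1) * R.ℓ))
          (by positivity)
        · intro x hx y hy hxy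
          simp only [Finset.mem_Icc] at hx hy
          have hkey : ∀ u v : ℕ, 1 ≤ u → u < v →
              Tolsa21.midx Q (2 ^ (u + 1) * R.ℓ) < Tolsa21.midx Q (2 ^ (v + 1) * R.ℓ) := by
            intro u v hu huv
            apply Tolsa21.midx_strict (hsideRS u hu)
            have h5 : (2:ℝ) ^ (u + 2) ≤ 2 ^ (v + 1) := pow_le_pow_right₀ one_le_two (by omega)
            have h6 : (2:ℝ) * (2 ^ (u + 1) * R.ℓ) = 2 ^ (u + 2) * R.ℓ := by ring
            have h7 := mul_le_mul_of_nonneg_right h5 hRℓ.le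
            linarith
          rcases Nat.lt_trichotomy x y with hlt | heq | hgt
          · exact absurd hxy (Nat.ne_of_lt (hkey x y hx.1 hlt))
          · exact heq
          · exact absurd hxy.symm (Nat.ne_of_lt (hkey y x hy.1 hgt))
        · intro k hk
          simp only [Finset.mem_Icc] at hk ⊢
          refine ⟨(Tolsa21.midx_mem _ _).1, Tolsa21.midx_le (by omega) ?_⟩
          have hb : 2 ^ (k + 1) * R.ℓ ≤ 4 * S.ℓ := Tolsa21.pow_succ_NQR_le hRSℓ hk.2
          have hc : (4:ℝ) * S.ℓ ≤ 4 * (2 ^ NQR Q S * Q.ℓ) := by linarith [hN2.2]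
          have hdd : (4:ℝ) * (2 ^ NQR Q S * Q.ℓ) = 2 ^ (NQR Q S + 2) * Q.ℓ := by ring
          linarith
        · intro k hk
          simp only [Finset.mem_Icc] at hk
          apply Tolsa21.transfer_term hd hC₀ hg
          · intro i
            have h1 := Tolsa21.center_close hQR i
            rw [abs_sub_comm] at h1
            have h2 : (1:ℝ) ≤ 2 ^ k := one_le_pow₀ (one_le_two)
            have h3 := mul_le_mul_of_nonneg_right h2 hRℓ.le
            linarith
          · exact hsideRS k hk.1
        · exact fun j => Tolsa21.term_nonneg Q j
      have hsplit : ∑ j ∈ Finset.Icc 1 (NQR Q S + 2), Tolsa21.term μ n Q j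
          = ∑ j ∈ Finset.Icc 1 (NQR Q S), Tolsa21.term μ n Q j
            + ∑ j ∈ Finset.Ioc (NQR Q S) (NQR Q S + 2), Tolsa21.term μ n Q j := by
        rw [show (1:ℕ) = 0 + 1 from rfl, Finset.Icc_add_one_left_eq_Ioc, Finset.Icc_add_one_left_eq_Ioc]
        exact (Finset.sum_Ioc_consecutive _ (Nat.zero_le _) (by omega)).symm
      have htail : ∑ j ∈ Finset.Ioc (NQR Q S) (NQR Q S + 2), Tolsa21.term μ n Q j ≤ 2 * A := by
        have h := Finset.sum_le_card_nsmul (Finset.Ioc (NQR Q S) (NQR Q S + 2)) _ A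
          (fun j _ => Tolsa21.term_le hd hC₀ hg Q j)
        rw [Nat.card_Ioc, show NQR Q S + 2 - NQR Q S = 2 by omega, nsmul_eq_mul] at h
        exact_mod_cast h
      have hSQS : 0 ≤ ∑ j ∈ Finset.Icc 1 (NQR Q S), Tolsa21.term μ n Q j :=
        Finset.sum_nonneg fun j _ => Tolsa21.term_nonneg Q j
      rw [Tolsa21.Kcoef_eq, Tolsa21.Kcoef_eq]
      nlinarith [key, mul_nonneg hSQS (show (0:ℝ) ≤ 4 ^ n * (3 * A) by positivity)]
    have claim3 : Kcoef n Q S ≤ (1 + 4 ^ n * (1 + 3 * A)) * (Kcoef n Q R + Kcoef n R S) := by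
      have hsideQ : ∀ x : ℕ, NQR Q R < x → 2 * R.ℓ ≤ 2 ^ (x + 1) * Q.ℓ := by
        intro x hx
        have h2 : (2:ℝ) ^ NQR Q R ≤ 2 ^ x := pow_le_pow_right₀ one_le_two (by omega)
        have h3 := hN0.2
        have h4 : (2:ℝ) ^ (x + 1) * Q.ℓ = 2 * (2 ^ x * Q.ℓ) := by ring
        have h5 := mul_le_mul_of_nonneg_right h2 hQℓ.le
        linarith
      have key : ∑ k ∈ Finset.Ioc (NQR Q R) (NQR Q S), Tolsa21.term μ n Q k ≤
          4 ^ n * ∑ j ∈ Finset.Icc 1 (NQR R S + 2), Tolsa21.term μ n R j := by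
        apply Tolsa21.sum_transfer (m := fun k => Tolsa21.midx R (2 ^ (k + 1) * Q.ℓ))
          (by positivity)
        · intro x hx y hy hxy
          simp only [Finset.mem_Ioc] at hx hy
          have hkey : ∀ u v : ℕ, NQR Q R < u → u < v →
              Tolsa21.midx R (2 ^ (u + 1) * Q.ℓ) < Tolsa21.midx R (2 ^ (v + 1) * Q.ℓ) := by
            intro u v hu huv
            apply Tolsa21.midx_strict (hsideQ u hu)
            have h5 : (2:ℝ) ^ (u + 2) ≤ 2 ^ (v + 1) := pow_le_pow_right₀ one_le_two (by omega)
            have h6 : (2:ℝ) * (2 ^ (u + 1) * Q.ℓ) = 2 ^ (u + 2) * Q.ℓ := by ring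
            have h7 := mul_le_mul_of_nonneg_right h5 hQℓ.le
            linarith
          rcases Nat.lt_trichotomy x y with hlt | heq | hgt
          · exact absurd hxy (Nat.ne_of_lt (hkey x y hx.1 hlt))
          · exact heq
          · exact absurd hxy.symm (Nat.ne_of_lt (hkey y x hy.1 hgt))
        · intro k hk
          simp only [Finset.mem_Ioc] at hk
          simp only [Finset.mem_Icc]
          refine ⟨(Tolsa21.midx_mem _ _).1, Tolsa21.midx_le (by omega) ?_⟩
          have hb : 2 ^ (k + 1) * Q.ℓ ≤ 4 * S.ℓ := Tolsa21.pow_succ_NQR_le hQSℓ hk.2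
          have hc : (4:ℝ) * S.ℓ ≤ 4 * (2 ^ NQR R S * R.ℓ) := by linarith [hN1.2]
          have hdd : (4:ℝ) * (2 ^ NQR R S * R.ℓ) = 2 ^ (NQR R S + 2) * R.ℓ := by ring
          linarith
        · intro k hk
          simp only [Finset.mem_Ioc] at hk
          apply Tolsa21.transfer_term hd hC₀ hg
          · intro i
            have h1 := Tolsa21.center_close hQR i
            have h2 : (2:ℝ) ^ NQR Q R ≤ 2 ^ k := pow_le_pow_right₀ one_le_two (by omega)
            have h3 := hN0.2
            have h5 := mul_le_mul_of_nonneg_right h2 hQℓ.le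
            linarith
          · exact hsideQ k hk.1
        · exact fun j => Tolsa21.term_nonneg R j
      have hsplitQ : ∑ j ∈ Finset.Icc 1 (NQR Q S), Tolsa21.term μ n Q j
          = ∑ j ∈ Finset.Icc 1 (NQR Q R), Tolsa21.term μ n Q j
            + ∑ j ∈ Finset.Ioc (NQR Q R) (NQR Q S), Tolsa21.term μ n Q j := by
        rw [show (1:ℕ) = 0 + 1 from rfl, Finset.Icc_add_one_left_eq_Ioc, Finset.Icc_add_one_left_eq_Ioc]
        exact (Finset.sum_Ioc_consecutive _ (Nat.zero_le _) hN02).symm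
      have hsplitR : ∑ j ∈ Finset.Icc 1 (NQR R S + 2), Tolsa21.term μ n R j
          = ∑ j ∈ Finset.Icc 1 (NQR R S), Tolsa21.term μ n R j
            + ∑ j ∈ Finset.Ioc (NQR R S) (NQR R S + 2), Tolsa21.term μ n R j := by
        rw [show (1:ℕ) = 0 + 1 from rfl, Finset.Icc_add_one_left_eq_Ioc, Finset.Icc_add_one_left_eq_Ioc]
        exact (Finset.sum_Ioc_consecutive _ (Nat.zero_le _) (by omega)).symm
      have htailR : ∑ j ∈ Finset.Ioc (NQR R S) (NQR R S + 2), Tolsa21.term μ n R j ≤ 2 * A := by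
        have h := Finset.sum_le_card_nsmul (Finset.Ioc (NQR R S) (NQR R S + 2)) _ A
          (fun j _ => Tolsa21.term_le hd hC₀ hg R j)
        rw [Nat.card_Ioc, show NQR R S + 2 - NQR R S = 2 by omega, nsmul_eq_mul] at h
        exact_mod_cast h
      have hSQR : 0 ≤ ∑ j ∈ Finset.Icc 1 (NQR Q R), Tolsa21.term μ n Q j :=
        Finset.sum_nonneg fun j _ => Tolsa21.term_nonneg Q j
      have hSRS : 0 ≤ ∑ j ∈ Finset.Icc 1 (NQR R S), Tolsa21.term μ n R j :=
        Finset.sum_nonneg fun j _ => Tolsa21.term_nonneg R j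
      rw [Tolsa21.Kcoef_eq, Tolsa21.Kcoef_eq, Tolsa21.Kcoef_eq]
      nlinarith [key, mul_nonneg hSQR (show (0:ℝ) ≤ 4 ^ n * (1 + 3 * A) by positivity),
        mul_nonneg hSRS (show (0:ℝ) ≤ 4 ^ n * (3 * A) by positivity)]
    exact ⟨claim1, claim2, claim3⟩
  · -- Part 2
    intro a ha
    refine ⟨1 + ((⌈a⌉₊ : ℝ) + 1) * A, ?_, ?_⟩
    · have h0 : (0:ℝ) ≤ (⌈a⌉₊ : ℝ) := Nat.cast_nonneg _
      nlinarith
    · intro μ hg Q R hQR hℓ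
      have hQℓ := Q.ℓ_pos
      have hcb : R.ℓ ≤ 2 ^ (⌈a⌉₊ + 1) * Q.ℓ := by
        have h1 : a ≤ (⌈a⌉₊ : ℝ) := Nat.le_ceil a
        have h2 : ((⌈a⌉₊ : ℕ) : ℝ) < 2 ^ ⌈a⌉₊ := by
          exact_mod_cast Nat.lt_two_pow_self (n := ⌈a⌉₊)
        have h3 : (2:ℝ) ^ ⌈a⌉₊ ≤ 2 ^ (⌈a⌉₊ + 1) := pow_le_pow_right₀ one_le_two (by omega)
        have h4 : a ≤ (2:ℝ) ^ (⌈a⌉₊ + 1) := by linarith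
        calc R.ℓ ≤ a * Q.ℓ := hℓ
          _ ≤ 2 ^ (⌈a⌉₊ + 1) * Q.ℓ := mul_le_mul_of_nonneg_right h4 hQℓ.le
      have hN : NQR Q R ≤ ⌈a⌉₊ + 1 := Tolsa21.NQR_le (by omega) hcb
      rw [Tolsa21.Kcoef_eq]
      have h := Finset.sum_le_card_nsmul (Finset.Icc 1 (NQR Q R)) _ A
        (fun j _ => Tolsa21.term_le hd hC₀ hg Q j)
      rw [Nat.card_Icc, nsmul_eq_mul] at h
      have hcard : ((NQR Q R + 1 - 1 : ℕ) : ℝ) ≤ (⌈a⌉₊ : ℝ) + 1 := by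
        rw [Nat.add_sub_cancel]
        exact_mod_cast hN
      have h5 := mul_le_mul_of_nonneg_right hcard hApos.le
      linarith
  · -- Part 3
    intro β hβ
    have h2n : (0:ℝ) < 2 ^ n := by positivity
    have hβ0 : (0:ℝ) < β := h2n.trans hβ
    set q : ℝ := 2 ^ n / β with hqdef
    have hq0 : 0 < q := div_pos h2n hβ0
    have hq1 : q < 1 := (div_lt_one hβ0).mpr hβ
    have hc0 : 0 < q⁻¹ * (1 - q)⁻¹ :=
      mul_pos (inv_pos.mpr hq0) (inv_pos.mpr (by linarith))
    refine ⟨1 + A * (q⁻¹ * (1 - q)⁻¹), by linarith [mul_pos hApos hc0], ?_⟩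
    intro μ hg Q N hN hndb
    have hchain : ∀ k, 1 ≤ k → ∀ j, k + j ≤ N - 1 →
        ENNReal.ofReal β ^ j * μ ((Q.pow2 k).set) ≤ μ ((Q.pow2 (k + j)).set) := by
      intro k hk j
      induction j with
      | zero => intro _; simp
      | succ j ih =>
        intro hj
        have h1 := ih (by omega)
        have h2 := hndb (k + j) (by omega) (by omega)
        rw [IsDoubling, Tolsa21.dil_two_eq, not_le] at h2
        calc ENNReal.ofReal β ^ (j + 1) * μ ((Q.pow2 k).set)
            = ENNReal.ofReal β * (ENNReal.ofReal β ^ j * μ ((Q.pow2 k).set)) := by ring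
          _ ≤ ENNReal.ofReal β * μ ((Q.pow2 (k + j)).set) := mul_le_mul_right h1 _
          _ ≤ μ ((Q.pow2 (k + j + 1)).set) := h2.le
    have hterm : ∀ k ∈ Finset.Icc 1 N, Tolsa21.term μ n Q k ≤ A * q ^ (N - 1 - k) := by
      intro k hk
      simp only [Finset.mem_Icc] at hk
      rcases Nat.lt_or_ge k N with hklt | hkge
      · have hkj : k + (N - 1 - k) = N - 1 := by omega
        have h1 := hchain k hk.1 (N - 1 - k) (by omega)
        rw [hkj] at h1
        set j := N - 1 - k with hjdef
        have h2 : β ^ j * (μ ((Q.pow2 k).set)).toReal ≤ (μ ((Q.pow2 (N - 1)).set)).toReal := by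
          have h := ENNReal.toReal_mono (Tolsa21.mu_cube_ne_top hd hg _) h1
          rwa [ENNReal.toReal_mul, ENNReal.toReal_pow, ENNReal.toReal_ofReal hβ0.le] at h
        have h3 : (μ ((Q.pow2 (N - 1)).set)).toReal
            ≤ C₀ * (Real.sqrt d * (2 ^ (N - 1) * Q.ℓ)) ^ n :=
          Tolsa21.mu_toReal_le hd hC₀ hg (Q.pow2 (N - 1))
        have h5 : (2:ℝ) ^ (N - 1) = 2 ^ j * 2 ^ k := by
          rw [← pow_add]
          congr 1
          omega
        have hb : (0:ℝ) < ((2:ℝ) ^ k * Q.ℓ) ^ n := by have := Q.ℓ_pos; positivity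
        have hβj : (0:ℝ) < β ^ j := by positivity
        have key : β ^ j * (μ ((Q.pow2 k).set)).toReal
            ≤ A * ((2:ℝ) ^ n) ^ j * ((2:ℝ) ^ k * Q.ℓ) ^ n := by
          calc β ^ j * (μ ((Q.pow2 k).set)).toReal
              ≤ (μ ((Q.pow2 (N - 1)).set)).toReal := h2
            _ ≤ C₀ * (Real.sqrt d * (2 ^ (N - 1) * Q.ℓ)) ^ n := h3
            _ = A * ((2:ℝ) ^ n) ^ j * ((2:ℝ) ^ k * Q.ℓ) ^ n := by rw [hA, h5]; ring
        rw [Tolsa21.term, div_le_iff₀ hb]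
        have h6 : (μ ((Q.pow2 k).set)).toReal
            ≤ A * ((2:ℝ) ^ n) ^ j * ((2:ℝ) ^ k * Q.ℓ) ^ n / β ^ j := by
          rw [le_div_iff₀ hβj]
          calc (μ ((Q.pow2 k).set)).toReal * β ^ j
              = β ^ j * (μ ((Q.pow2 k).set)).toReal := by ring
            _ ≤ _ := key
        calc (μ ((Q.pow2 k).set)).toReal
            ≤ A * ((2:ℝ) ^ n) ^ j * ((2:ℝ) ^ k * Q.ℓ) ^ n / β ^ j := h6
          _ = A * q ^ j * ((2:ℝ) ^ k * Q.ℓ) ^ n := by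
              rw [hqdef, div_pow]
              field_simp
              try ring
      · have h0 : N - 1 - k = 0 := by omega
        rw [h0, pow_zero, mul_one]
        exact Tolsa21.term_le hd hC₀ hg Q k
    rw [Tolsa21.Kcoef_eq, Tolsa21.NQR_pow2 hN]
    have hsum1 : ∑ k ∈ Finset.Icc 1 N, Tolsa21.term μ n Q k
        ≤ ∑ k ∈ Finset.Icc 1 N, A * q ^ (N - 1 - k) := Finset.sum_le_sum hterm
    have hsum2 : ∑ k ∈ Finset.Icc 1 N, q ^ (N - 1 - k) ≤ q⁻¹ * ∑ j ∈ Finset.range N, q ^ j := by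
      apply Tolsa21.sum_transfer (m := fun k => N - k) (inv_nonneg.mpr hq0.le)
      · intro x hx y hy hxy
        simp only [Finset.mem_Icc] at hx hy
        omega
      · intro k hk
        simp only [Finset.mem_Icc] at hk
        exact Finset.mem_range.mpr (by omega)
      · intro k hk
        simp only [Finset.mem_Icc] at hk
        rcases Nat.lt_or_ge k N with h | h
        · have he : N - k = (N - 1 - k) + 1 := by omega
          rw [he, pow_succ, mul_comm (q ^ (N - 1 - k)) q, ← mul_assoc,
            inv_mul_cancel₀ hq0.ne', one_mul]
        · have hkN : k = N := by omega
          rw [hkN, Nat.sub_self, show N - 1 - N = 0 by omega]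
          simp only [pow_zero, mul_one]
          have h1 : q * q⁻¹ = 1 := mul_inv_cancel₀ hq0.ne'
          nlinarith [inv_pos.mpr hq0]
      · intro j; positivity
    have hgeo := Tolsa21.sum_pow_le hq0.le hq1 (Finset.range N)
    have hfin : ∑ k ∈ Finset.Icc 1 N, A * q ^ (N - 1 - k) ≤ A * (q⁻¹ * (1 - q)⁻¹) := by
      rw [← Finset.mul_sum]
      apply mul_le_mul_of_nonneg_left _ hApos.le
      calc ∑ k ∈ Finset.Icc 1 N, q ^ (N - 1 - k)
          ≤ q⁻¹ * ∑ j ∈ Finset.range N, q ^ j := hsum2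
        _ ≤ q⁻¹ * (1 - q)⁻¹ := mul_le_mul_of_nonneg_left hgeo (inv_nonneg.mpr hq0.le)
    linarith
  · -- Part 4
    intro β hβ
    have h2n : (0:ℝ) < 2 ^ n := by positivity
    set r : ℝ := max β 0 with hrdef
    have hr0 : 0 ≤ r := le_max_right _ _
    have hrlt : r < 2 ^ n := max_lt hβ h2n
    set q : ℝ := r / 2 ^ n with hqdef
    have hq0 : 0 ≤ q := div_nonneg hr0 h2n.le
    have hq1 : q < 1 := (div_lt_one h2n).mpr hrlt
    have hc0 : 0 < (1 - q)⁻¹ := inv_pos.mpr (by linarith)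
    refine ⟨1 + A * (1 - q)⁻¹, by linarith [mul_pos hApos hc0], ?_⟩
    intro μ hg Q N hN hdbl
    have hchain : ∀ k, k ≤ N → μ ((Q.pow2 k).set) ≤ ENNReal.ofReal r ^ k * μ ((Q.pow2 0).set) := by
      intro k
      induction k with
      | zero => intro _; simp
      | succ k ih =>
        intro hk
        have h1 := hdbl (k + 1) (by omega) hk
        rw [Nat.add_sub_cancel] at h1
        calc μ ((Q.pow2 (k + 1)).set) ≤ ENNReal.ofReal β * μ ((Q.pow2 k).set) := h1
          _ ≤ ENNReal.ofReal r * (ENNReal.ofReal r ^ k * μ ((Q.pow2 0).set)) :=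
              mul_le_mul' (ENNReal.ofReal_le_ofReal (le_max_left _ _)) (ih (by omega))
          _ = ENNReal.ofReal r ^ (k + 1) * μ ((Q.pow2 0).set) := by ring
    have hterm : ∀ k ∈ Finset.Icc 1 N, Tolsa21.term μ n Q k ≤ A * q ^ k := by
      intro k hk
      simp only [Finset.mem_Icc] at hk
      have h1 := hchain k hk.2
      have h2 : (μ ((Q.pow2 k).set)).toReal ≤ r ^ k * (μ ((Q.pow2 0).set)).toReal := by
        have hfin : ENNReal.ofReal r ^ k * μ ((Q.pow2 0).set) ≠ ⊤ :=
          ENNReal.mul_ne_top (ENNReal.pow_ne_top ENNReal.ofReal_ne_top)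
            (Tolsa21.mu_cube_ne_top hd hg _)
        have h := ENNReal.toReal_mono hfin h1
        rwa [ENNReal.toReal_mul, ENNReal.toReal_pow, ENNReal.toReal_ofReal hr0] at h
      have h3 : (μ ((Q.pow2 0).set)).toReal ≤ C₀ * (Real.sqrt d * (2 ^ (0:ℕ) * Q.ℓ)) ^ n :=
        Tolsa21.mu_toReal_le hd hC₀ hg (Q.pow2 0)
      have hb : (0:ℝ) < ((2:ℝ) ^ k * Q.ℓ) ^ n := by have := Q.ℓ_pos; positivity
      rw [Tolsa21.term, div_le_iff₀ hb]
      have h4 : (μ ((Q.pow2 k).set)).toReal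
          ≤ r ^ k * (C₀ * (Real.sqrt d * (2 ^ (0:ℕ) * Q.ℓ)) ^ n) := by
        have hm := mul_le_mul_of_nonneg_left h3 (pow_nonneg hr0 k)
        linarith
      calc (μ ((Q.pow2 k).set)).toReal
          ≤ r ^ k * (C₀ * (Real.sqrt d * (2 ^ (0:ℕ) * Q.ℓ)) ^ n) := h4
        _ = A * q ^ k * ((2:ℝ) ^ k * Q.ℓ) ^ n := by
            rw [hA, hqdef, div_pow]
            field_simp
            try ring
    rw [Tolsa21.Kcoef_eq, Tolsa21.NQR_pow2 hN]
    have hsum1 : ∑ k ∈ Finset.Icc 1 N, Tolsa21.term μ n Q k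
        ≤ ∑ k ∈ Finset.Icc 1 N, A * q ^ k := Finset.sum_le_sum hterm
    have hsum2 : ∑ k ∈ Finset.Icc 1 N, A * q ^ k ≤ A * (1 - q)⁻¹ := by
      rw [← Finset.mul_sum]
      apply mul_le_mul_of_nonneg_left _ hApos.le
      calc ∑ k ∈ Finset.Icc 1 N, q ^ k ≤ ∑ k ∈ Finset.range (N + 1), q ^ k := by
            apply Finset.sum_le_sum_of_subset_of_nonneg
            · intro k hk
              simp only [Finset.mem_Icc] at hk
              exact Finset.mem_range.mpr (by omega)
            · intro k _ _
              positivity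
        _ ≤ (1 - q)⁻¹ := Tolsa21.sum_pow_le hq0 hq1 _
    linarith
end

section
/- For all ρ > η > 1 there is a constant C, depending only on ρ, η, d, n and C₀, such that for every f ∈ L¹_loc(μ): ‖f‖_{**,(ρ)} ≤ ‖f‖_{**,(η)} ≤ C·‖f‖_{**,(ρ)}. In particular, all the norms ‖·‖_{**,(ρ)}, ρ > 1, are equivalent. -/
/-!
Common definitions for formalizing Tolsa, "BMO, H¹, and Calderón–Zygmund
operators for non doubling measures".
-/

open MeasureTheory Metric Set Function
open scoped Classical
open scoped ENNReal NNReal BigOperators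

noncomputable section AuxLemmas

open MeasureTheory Metric Set
open scoped ENNReal

variable {d : ℕ}

lemma aux_measSupp_compl_null (μ : MeasureTheory.Measure (Euc d)) :
    μ ((measSupp μ)ᶜ) = 0 := by
  have h : ∀ x : ((measSupp μ)ᶜ : Set (Euc d)), ∃ r : ℝ, 0 < r ∧ μ (Metric.ball x.1 r) = 0 := by
    rintro ⟨x, hx⟩
    simp only [measSupp, mem_compl_iff, mem_setOf_eq] at hx
    push_neg at hx
    obtain ⟨r, hr, h0⟩ := hx
    exact ⟨r, hr, le_antisymm h0 zero_le⟩
  choose r hr h0 using h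
  have hcov : ((measSupp μ)ᶜ : Set (Euc d)) ⊆
      ⋃ x : ((measSupp μ)ᶜ : Set (Euc d)), Metric.ball x.1 (r x) := by
    intro x hx
    exact mem_iUnion.2 ⟨⟨x, hx⟩, Metric.mem_ball_self (hr ⟨x, hx⟩)⟩
  obtain ⟨T, hTc, hT⟩ := TopologicalSpace.isOpen_iUnion_countable
    (fun x : ((measSupp μ)ᶜ : Set (Euc d)) => Metric.ball x.1 (r x)) (fun _ => Metric.isOpen_ball)
  have hz : μ (⋃ x : ((measSupp μ)ᶜ : Set (Euc d)), Metric.ball x.1 (r x)) = 0 := by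
    rw [← hT]
    exact (measure_biUnion_null_iff hTc).2 fun x _ => h0 x
  exact measure_mono_null hcov hz

lemma aux_cube_measure_le {μ : MeasureTheory.Measure (Euc d)} {n : ℕ} {C₀ : ℝ}
    (hd : 0 < d) (hμ : GrowthBound μ n C₀)
    (x : Euc d) (L : ℝ) (hL : 0 < L) :
    μ {y : Euc d | ∀ i, |y i - x i| ≤ L / 2} ≤
      ENNReal.ofReal (C₀ * (Real.sqrt d * L) ^ n) := by
  have hsd : (0:ℝ) < Real.sqrt d := Real.sqrt_pos.2 (by exact_mod_cast hd)
  have hsub : {y : Euc d | ∀ i, |y i - x i| ≤ L / 2} ⊆ Metric.ball x (Real.sqrt d * L) := by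
    intro y hy
    have hdist : dist y x ≤ Real.sqrt d * (L / 2) := by
      rw [EuclideanSpace.dist_eq]
      have hsum : ∑ i, dist (y i) (x i) ^ 2 ≤ (d : ℝ) * (L / 2) ^ 2 := by
        calc ∑ i, dist (y i) (x i) ^ 2 ≤ ∑ _i : Fin d, (L / 2) ^ 2 := by
              apply Finset.sum_le_sum
              intro i _
              have h1 : dist (y i) (x i) = |y i - x i| := Real.dist_eq _ _
              have h2 := hy i
              nlinarith [abs_nonneg (y i - x i)]
          _ = (d : ℝ) * (L / 2) ^ 2 := by
              rw [Finset.sum_const, Finset.card_univ, Fintype.card_fin, nsmul_eq_mul]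
      calc Real.sqrt (∑ i, dist (y i) (x i) ^ 2) ≤ Real.sqrt ((d : ℝ) * (L / 2) ^ 2) :=
            Real.sqrt_le_sqrt hsum
        _ = Real.sqrt d * (L / 2) := by
            rw [Real.sqrt_mul (by positivity), Real.sqrt_sq (by positivity)]
    have hlt : Real.sqrt d * (L / 2) < Real.sqrt d * L := by nlinarith
    exact Metric.mem_ball.2 (lt_of_le_of_lt hdist hlt)
  calc μ _ ≤ μ (Metric.ball x (Real.sqrt d * L)) := measure_mono hsub
    _ ≤ ENNReal.ofReal (C₀ * (Real.sqrt d * L) ^ n) := hμ x _ (by positivity)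

lemma aux_Kcoef_le {μ : MeasureTheory.Measure (Euc d)} {n : ℕ} {C₀ : ℝ}
    (hd : 0 < d) (hμ : GrowthBound μ n C₀) (hC₀ : 0 ≤ C₀)
    (Q R : CubeOf μ) (N₀ : ℕ) (hN : NQR Q R ≤ N₀) :
    Kcoef n Q R ≤ 1 + (N₀ : ℝ) * (C₀ * Real.sqrt d ^ n) := by
  have hA0 : 0 ≤ C₀ * Real.sqrt d ^ n := mul_nonneg hC₀ (by positivity)
  have hterm : ∀ k ∈ Finset.Icc 1 (NQR Q R),
      (μ ((Q.pow2 k).set)).toReal / ((2 ^ k * Q.ℓ) ^ n) ≤ C₀ * Real.sqrt d ^ n := by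
    intro k _
    have hL : (0:ℝ) < 2 ^ k * Q.ℓ := mul_pos (by positivity) Q.ℓ_pos
    have hm := aux_cube_measure_le hd hμ Q.c (2 ^ k * Q.ℓ) hL
    have htr : (μ ((Q.pow2 k).set)).toReal ≤ C₀ * (Real.sqrt d * (2 ^ k * Q.ℓ)) ^ n :=
      ENNReal.toReal_le_of_le_ofReal (mul_nonneg hC₀ (by positivity)) hm
    rw [div_le_iff₀ (by positivity : (0:ℝ) < (2 ^ k * Q.ℓ) ^ n)]
    calc (μ ((Q.pow2 k).set)).toReal ≤ C₀ * (Real.sqrt d * (2 ^ k * Q.ℓ)) ^ n := htr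
      _ = C₀ * Real.sqrt d ^ n * (2 ^ k * Q.ℓ) ^ n := by rw [mul_pow]; ring
  have hsum := Finset.sum_le_card_nsmul (Finset.Icc 1 (NQR Q R)) _ _ hterm
  rw [Nat.card_Icc] at hsum
  simp only [Nat.add_sub_cancel, nsmul_eq_mul] at hsum
  have hcast : ((NQR Q R : ℝ)) * (C₀ * Real.sqrt d ^ n) ≤ (N₀ : ℝ) * (C₀ * Real.sqrt d ^ n) := by
    apply mul_le_mul_of_nonneg_right _ hA0
    exact_mod_cast hN
  unfold Kcoef
  linarith

lemma aux_one_le_Kcoef {μ : MeasureTheory.Measure (Euc d)} (n : ℕ) (Q R : CubeOf μ) :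
    (1:ℝ) ≤ Kcoef n Q R := by
  unfold Kcoef
  have h : (0:ℝ) ≤ ∑ k ∈ Finset.Icc 1 (NQR Q R),
      (μ ((Q.pow2 k).set)).toReal / ((2 ^ k * Q.ℓ) ^ n) := by
    apply Finset.sum_nonneg
    intro k _
    exact div_nonneg ENNReal.toReal_nonneg
      (pow_nonneg (mul_nonneg (by positivity) Q.ℓ_pos.le) n)
  linarith

end AuxLemmas

set_option maxHeartbeats 1000000 in
/-- Lemma 2.6: the norms `‖·‖_{**,(ρ)}`, `ρ > 1`, are equivalent. -/
theorem statement1 (d n : ℕ) (hn : 1 ≤ n) (hnd : n ≤ d) (C₀ : ℝ) (hC₀ : 0 < C₀)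
    (ρ η : ℝ) (hη : 1 < η) (hρη : η < ρ) :
    ∃ C : ℝ, 0 < C ∧ ∀ μ : MeasureTheory.Measure (Euc d), GrowthBound μ n C₀ →
      ∀ f : Euc d → ℝ, MeasureTheory.LocallyIntegrable f μ →
        starStarNorm μ n ρ f ≤ starStarNorm μ n η f ∧
        starStarNorm μ n η f ≤ ENNReal.ofReal C * starStarNorm μ n ρ f := by
  classical
  have hd : 0 < d := lt_of_lt_of_le hn hnd
  set m : ℕ := ⌈2 * ρ / (η - 1)⌉₊ + 1 with hmdef
  have hm0 : 0 < m := Nat.succ_pos _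
  have hmR : (0:ℝ) < m := by exact_mod_cast hm0
  have hρ0 : (0:ℝ) < ρ := lt_trans (lt_trans one_pos hη) hρη
  have hmge : 2 * ρ / (η - 1) ≤ (m : ℝ) := by
    have h := Nat.le_ceil (2 * ρ / (η - 1))
    have : ((⌈2 * ρ / (η - 1)⌉₊ : ℝ)) ≤ (m : ℝ) := by
      rw [hmdef]; push_cast; linarith
    linarith
  set A : ℝ := C₀ * Real.sqrt d ^ n with hAdef
  have hA0 : 0 ≤ A := mul_nonneg hC₀.le (by positivity)
  set K1 : ℝ := 1 + ((m:ℝ) + 1) * A with hK1def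
  set K2 : ℝ := 1 + 2 * A with hK2def
  have hK10 : 0 ≤ K1 := by
    have := mul_nonneg (by positivity : (0:ℝ) ≤ (m:ℝ) + 1) hA0
    rw [hK1def]; linarith
  have hK20 : 0 ≤ K2 := by rw [hK2def]; linarith
  set B : ℝ := K1 + K2 with hBdef
  have hB0 : 0 ≤ B := by rw [hBdef]; linarith
  set Creal : ℝ := (m:ℝ) ^ d * (1 + B) + 1 with hCrealdef
  have hCreal1 : (1:ℝ) ≤ Creal := by
    have h1 : (0:ℝ) ≤ (m:ℝ) ^ d := by positivity
    nlinarith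
  refine ⟨Creal, by linarith, ?_⟩
  intro μ hμ f _hf
  constructor
  · -- easy direction
    apply sInf_le_sInf
    rintro C ⟨fQ, hb1, hb2⟩
    refine ⟨fQ, fun Q => (hb1 Q).trans (mul_le_mul_right (measure_mono ?_) C), hb2⟩
    intro y hy i
    have h1 : |y i - Q.c i| ≤ η * Q.ℓ / 2 := hy i
    have hl := Q.ℓ_pos
    show |y i - Q.c i| ≤ ρ * Q.ℓ / 2
    nlinarith
  · -- hard direction
    have key : ∀ (C : ℝ≥0∞) (fQ : CubeOf μ → ℝ), StarStarBoundWith μ n ρ f fQ C →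
        StarStarBoundWith μ n η f fQ (ENNReal.ofReal Creal * C) := by
      rintro C fQ ⟨hb1, hb2⟩
      have hone : (1:ℝ≥0∞) ≤ ENNReal.ofReal Creal := by
        rw [← ENNReal.ofReal_one]
        exact ENNReal.ofReal_le_ofReal hCreal1
      refine ⟨?_, fun Q R hQR => (hb2 Q R hQR).trans ?_⟩
      swap
      · rw [mul_assoc]
        exact le_mul_of_one_le_left zero_le hone
      intro Q
      have hl : 0 < Q.ℓ := Q.ℓ_pos
      -- grid cells
      set P : (Fin d → Fin m) → Set (Euc d) := fun v =>
        {y : Euc d | ∀ i, (v i : ℝ) * Q.ℓ ≤ (m:ℝ) * (y i - Q.c i + Q.ℓ / 2) ∧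
          (m:ℝ) * (y i - Q.c i + Q.ℓ / 2) ≤ ((v i : ℝ) + 1) * Q.ℓ} with hPdef
      -- cells are inside Q
      have hPQ : ∀ v, P v ⊆ Q.set := by
        intro v y hy i
        obtain ⟨h1, h2⟩ := hy i
        have hv1 : ((v i : ℝ) + 1) ≤ (m:ℝ) := by exact_mod_cast (v i).2
        have hv0 : (0:ℝ) ≤ (v i : ℝ) := by positivity
        show |y i - Q.c i| ≤ Q.ℓ / 2
        rw [abs_le]
        constructor <;> nlinarith [mul_nonneg hv0 hl.le]
      have hQdil : Q.set ⊆ Q.dil η := by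
        intro y hy i
        have h1 : |y i - Q.c i| ≤ Q.ℓ / 2 := hy i
        show |y i - Q.c i| ≤ η * Q.ℓ / 2
        nlinarith
      -- coverage
      have hcover : Q.set ⊆ ⋃ v, P v := by
        intro y hy
        have hyc : ∀ i, |y i - Q.c i| ≤ Q.ℓ / 2 := hy
        have hvlt : ∀ i : Fin d,
            min ⌊(m:ℝ) * (y i - Q.c i + Q.ℓ / 2) / Q.ℓ⌋₊ (m - 1) < m :=
          fun i => lt_of_le_of_lt (min_le_right _ _) (by omega)
        refine mem_iUnion.2 ⟨fun i => ⟨_, hvlt i⟩, ?_⟩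
        simp only [hPdef, mem_setOf_eq, Fin.val_mk]
        intro i
        have ht0 : 0 ≤ y i - Q.c i + Q.ℓ / 2 := by
          have := abs_le.1 (hyc i); linarith [this.1]
        have htl : y i - Q.c i + Q.ℓ / 2 ≤ Q.ℓ := by
          have := abs_le.1 (hyc i); linarith [this.2]
        have hu0 : 0 ≤ (m:ℝ) * (y i - Q.c i + Q.ℓ / 2) / Q.ℓ := by positivity
        have hfl : ((min ⌊(m:ℝ) * (y i - Q.c i + Q.ℓ / 2) / Q.ℓ⌋₊ (m-1) : ℕ) : ℝ)
            ≤ (m:ℝ) * (y i - Q.c i + Q.ℓ / 2) / Q.ℓ := by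
          calc ((min ⌊(m:ℝ) * (y i - Q.c i + Q.ℓ / 2) / Q.ℓ⌋₊ (m-1) : ℕ) : ℝ)
              ≤ ((⌊(m:ℝ) * (y i - Q.c i + Q.ℓ / 2) / Q.ℓ⌋₊ : ℕ) : ℝ) := by
                exact_mod_cast min_le_left _ _
            _ ≤ _ := Nat.floor_le hu0
        have hfu : (m:ℝ) * (y i - Q.c i + Q.ℓ / 2) / Q.ℓ
            ≤ ((min ⌊(m:ℝ) * (y i - Q.c i + Q.ℓ / 2) / Q.ℓ⌋₊ (m-1) : ℕ) : ℝ) + 1 := by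
          rcases le_or_gt ⌊(m:ℝ) * (y i - Q.c i + Q.ℓ / 2) / Q.ℓ⌋₊ (m-1) with h | h
          · rw [min_eq_left h]
            exact (Nat.lt_floor_add_one _).le
          · rw [min_eq_right h.le]
            have hum : (m:ℝ) * (y i - Q.c i + Q.ℓ / 2) / Q.ℓ ≤ (m:ℝ) := by
              rw [div_le_iff₀ hl]; nlinarith
            have hc : ((m - 1 : ℕ) : ℝ) = (m:ℝ) - 1 := by
              have h1 : (1:ℕ) ≤ m := hm0
              push_cast [Nat.cast_sub h1]
              ring
            rw [hc]
            linarith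
        constructor
        · have := (le_div_iff₀ hl).1 hfl
          linarith
        · have := (div_le_iff₀ hl).1 hfu
          linarith
      -- per-cell bound
      have hcell : ∀ v : Fin d → Fin m,
          ∫⁻ x in P v ∩ measSupp μ, ENNReal.ofReal |f x - fQ Q| ∂μ ≤
            C * ENNReal.ofReal (1 + B) * μ (Q.dil η) := by
        intro v
        rcases Set.eq_empty_or_nonempty (P v ∩ measSupp μ) with he | ⟨xv, hxP, hxs⟩
        · simp [he]
        · have hQvl : (0:ℝ) < 2 * Q.ℓ / m := by positivity
          set Qv : CubeOf μ := ⟨xv, 2 * Q.ℓ / m, hQvl, hxs⟩ with hQvdef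
          set Sv : CubeOf μ := ⟨xv, 4 * Q.ℓ, by positivity, hxs⟩ with hSvdef
          have hxQ : ∀ i, |xv i - Q.c i| ≤ Q.ℓ / 2 := hPQ v hxP
          -- P v ⊆ Qv
          have hPQv : P v ⊆ Qv.set := by
            intro y hy i
            obtain ⟨h1, h2⟩ := hy i
            obtain ⟨h3, h4⟩ := hxP i
            show |y i - xv i| ≤ (2 * Q.ℓ / m) / 2
            have heq : (2 * Q.ℓ / (m:ℝ)) / 2 = Q.ℓ / (m:ℝ) := by ring
            have hy1 : (y i - xv i) * m ≤ Q.ℓ := by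
              have hr : (y i - xv i) * m
                  = (m:ℝ) * (y i - Q.c i + Q.ℓ / 2) - (m:ℝ) * (xv i - Q.c i + Q.ℓ / 2) := by
                ring
              linarith
            have hy2 : (xv i - y i) * m ≤ Q.ℓ := by
              have hr : (xv i - y i) * m
                  = (m:ℝ) * (xv i - Q.c i + Q.ℓ / 2) - (m:ℝ) * (y i - Q.c i + Q.ℓ / 2) := by
                ring
              linarith
            rw [heq, abs_le]
            constructor
            · have := (le_div_iff₀ hmR).mpr hy2
              linarith
            · exact (le_div_iff₀ hmR).mpr hy1
          -- Qv ⊆ Sv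
          have hQvS : Qv.set ⊆ Sv.set := by
            intro y hy i
            have h1 : |y i - xv i| ≤ (2 * Q.ℓ / m) / 2 := hy i
            show |y i - xv i| ≤ 4 * Q.ℓ / 2
            have hm1 : (1:ℝ) ≤ (m:ℝ) := by exact_mod_cast hm0
            have h2 : 2 * Q.ℓ / (m:ℝ) ≤ 2 * Q.ℓ := div_le_self (by positivity) hm1
            linarith
          -- Q ⊆ Sv
          have hQS : Q.set ⊆ Sv.set := by
            intro y hy i
            have h1 : |y i - Q.c i| ≤ Q.ℓ / 2 := hy i
            have h2 := hxQ i
            show |y i - xv i| ≤ 4 * Q.ℓ / 2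
            calc |y i - xv i| ≤ |y i - Q.c i| + |Q.c i - xv i| := abs_sub_le _ _ _
              _ ≤ Q.ℓ / 2 + Q.ℓ / 2 := by
                  rw [abs_sub_comm] at h2
                  exact add_le_add h1 h2
              _ ≤ 4 * Q.ℓ / 2 := by linarith
          -- dilation inclusion
          have hdil : Qv.dil ρ ⊆ Q.dil η := by
            intro y hy i
            have h1 : |y i - xv i| ≤ ρ * (2 * Q.ℓ / m) / 2 := hy i
            have h2 := hxQ i
            show |y i - Q.c i| ≤ η * Q.ℓ / 2
            have hkey : ρ * (2 * Q.ℓ / m) / 2 ≤ (η - 1) * Q.ℓ / 2 := by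
              rw [div_le_iff₀ (by linarith : (0:ℝ) < η - 1)] at hmge
              have h3 : ρ * (2 * Q.ℓ / (m:ℝ)) / 2 = ρ * Q.ℓ / (m:ℝ) := by ring
              rw [h3, div_le_iff₀ hmR]
              nlinarith [mul_le_mul_of_nonneg_right hmge hl.le]
            calc |y i - Q.c i| ≤ |y i - xv i| + |xv i - Q.c i| := abs_sub_le _ _ _
              _ ≤ ρ * (2 * Q.ℓ / m) / 2 + Q.ℓ / 2 := add_le_add h1 h2
              _ ≤ (η - 1) * Q.ℓ / 2 + Q.ℓ / 2 := by linarith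
              _ = η * Q.ℓ / 2 := by ring
          -- NQR bounds
          have hN1 : NQR Qv Sv ≤ m + 1 := by
            apply Nat.sInf_le
            refine ⟨by omega, ?_⟩
            show (4:ℝ) * Q.ℓ ≤ 2 ^ (m+1) * (2 * Q.ℓ / m)
            have h2m : (m:ℝ) ≤ 2 ^ m := by exact_mod_cast (Nat.lt_two_pow_self (n := m)).le
            have heq : (2:ℝ) ^ (m+1) * (2 * Q.ℓ / m) = 2 ^ m * 4 * Q.ℓ / m := by
              rw [pow_succ]
              ring
            rw [heq, le_div_iff₀ hmR]
            nlinarith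
          have hN2 : NQR Q Sv ≤ 2 := by
            apply Nat.sInf_le
            refine ⟨by omega, ?_⟩
            show (4:ℝ) * Q.ℓ ≤ 2 ^ 2 * Q.ℓ
            norm_num
          have hKb1 : Kcoef n Qv Sv ≤ K1 := by
            have h := aux_Kcoef_le hd hμ hC₀.le Qv Sv (m+1) hN1
            rw [hK1def, hAdef]
            push_cast at h ⊢
            linarith
          have hKb2 : Kcoef n Q Sv ≤ K2 := by
            have h := aux_Kcoef_le hd hμ hC₀.le Q Sv 2 hN2
            rw [hK2def, hAdef]
            push_cast at h ⊢
            linarith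
          have hdiffb : ENNReal.ofReal |fQ Qv - fQ Q| ≤ C * ENNReal.ofReal B := by
            calc ENNReal.ofReal |fQ Qv - fQ Q|
                ≤ ENNReal.ofReal (|fQ Qv - fQ Sv| + |fQ Q - fQ Sv|) := by
                  apply ENNReal.ofReal_le_ofReal
                  calc |fQ Qv - fQ Q| ≤ |fQ Qv - fQ Sv| + |fQ Sv - fQ Q| := abs_sub_le _ _ _
                    _ = |fQ Qv - fQ Sv| + |fQ Q - fQ Sv| := by rw [abs_sub_comm (fQ Sv)]
              _ ≤ ENNReal.ofReal |fQ Qv - fQ Sv| + ENNReal.ofReal |fQ Q - fQ Sv| :=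
                  ENNReal.ofReal_add_le
              _ ≤ C * ENNReal.ofReal (Kcoef n Qv Sv) + C * ENNReal.ofReal (Kcoef n Q Sv) :=
                  add_le_add (hb2 Qv Sv hQvS) (hb2 Q Sv hQS)
              _ ≤ C * ENNReal.ofReal K1 + C * ENNReal.ofReal K2 :=
                  add_le_add (mul_le_mul_right (ENNReal.ofReal_le_ofReal hKb1) C)
                    (mul_le_mul_right (ENNReal.ofReal_le_ofReal hKb2) C)
              _ = C * ENNReal.ofReal B := by
                  rw [← mul_add, ← ENNReal.ofReal_add hK10 hK20]
          calc ∫⁻ x in P v ∩ measSupp μ, ENNReal.ofReal |f x - fQ Q| ∂μ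
              ≤ ∫⁻ x in P v ∩ measSupp μ,
                  (ENNReal.ofReal |f x - fQ Qv| + C * ENNReal.ofReal B) ∂μ := by
                apply lintegral_mono
                intro x
                calc ENNReal.ofReal |f x - fQ Q|
                    ≤ ENNReal.ofReal (|f x - fQ Qv| + |fQ Qv - fQ Q|) :=
                      ENNReal.ofReal_le_ofReal (abs_sub_le _ _ _)
                  _ ≤ ENNReal.ofReal |f x - fQ Qv| + ENNReal.ofReal |fQ Qv - fQ Q| :=
                      ENNReal.ofReal_add_le
                  _ ≤ _ := add_le_add_right hdiffb _
            _ = (∫⁻ x in P v ∩ measSupp μ, ENNReal.ofReal |f x - fQ Qv| ∂μ)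
                  + (C * ENNReal.ofReal B) * μ (P v ∩ measSupp μ) := by
                rw [lintegral_add_right _ measurable_const, setLIntegral_const]
            _ ≤ C * μ (Qv.dil ρ) + (C * ENNReal.ofReal B) * μ (Q.dil η) := by
                apply add_le_add
                · exact (lintegral_mono_set (inter_subset_left.trans hPQv)).trans (hb1 Qv)
                · exact mul_le_mul_right
                    (measure_mono (inter_subset_left.trans ((hPQ v).trans hQdil))) _
            _ ≤ C * μ (Q.dil η) + (C * ENNReal.ofReal B) * μ (Q.dil η) :=
                add_le_add_left (mul_le_mul_right (measure_mono hdil) C) _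
            _ = C * ENNReal.ofReal (1 + B) * μ (Q.dil η) := by
                rw [ENNReal.ofReal_add zero_le_one hB0, ENNReal.ofReal_one]
                ring
      -- assemble
      have hae : (Q.set : Set (Euc d)) =ᵐ[μ] ((Q.set ∩ measSupp μ : Set (Euc d))) := by
        rw [MeasureTheory.ae_eq_set]
        constructor
        · apply measure_mono_null _ (aux_measSupp_compl_null μ)
          intro x hx
          exact fun hs => hx.2 ⟨hx.1, hs⟩
        · have hempty : (Q.set ∩ measSupp μ) \ Q.set = ∅ := by
            ext x
            simp only [mem_diff, mem_inter_iff, mem_empty_iff_false, iff_false, not_and]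
            tauto
          rw [hempty]
          exact measure_empty
      calc ∫⁻ x in Q.set, ENNReal.ofReal |f x - fQ Q| ∂μ
          = ∫⁻ x in Q.set ∩ measSupp μ, ENNReal.ofReal |f x - fQ Q| ∂μ :=
            setLIntegral_congr hae
        _ ≤ ∫⁻ x in ⋃ v : Fin d → Fin m, (P v ∩ measSupp μ),
              ENNReal.ofReal |f x - fQ Q| ∂μ := by
            apply lintegral_mono_set
            intro x hx
            obtain ⟨v, hv⟩ := mem_iUnion.1 (hcover hx.1)
            exact mem_iUnion.2 ⟨v, hv, hx.2⟩
        _ ≤ ∑' v : Fin d → Fin m,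
              ∫⁻ x in P v ∩ measSupp μ, ENNReal.ofReal |f x - fQ Q| ∂μ :=
            lintegral_iUnion_le _ _
        _ ≤ ∑' _v : Fin d → Fin m, C * ENNReal.ofReal (1 + B) * μ (Q.dil η) :=
            ENNReal.tsum_le_tsum hcell
        _ = ((m ^ d : ℕ) : ℝ≥0∞) * (C * ENNReal.ofReal (1 + B) * μ (Q.dil η)) := by
            rw [tsum_fintype, Finset.sum_const, Finset.card_univ, nsmul_eq_mul]
            congr 1
            rw [Fintype.card_fun, Fintype.card_fin, Fintype.card_fin]
        _ ≤ (ENNReal.ofReal Creal * C) * μ (Q.dil η) := by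
            have h1 : ((m ^ d : ℕ) : ℝ≥0∞) * (C * ENNReal.ofReal (1 + B) * μ (Q.dil η))
                = (ENNReal.ofReal ((m:ℝ) ^ d * (1 + B)) * C) * μ (Q.dil η) := by
              rw [ENNReal.ofReal_mul (by positivity : (0:ℝ) ≤ (m:ℝ) ^ d)]
              rw [← ENNReal.ofReal_natCast (m ^ d)]
              push_cast
              ring
            rw [h1]
            refine mul_le_mul_left (mul_le_mul_left ?_ C) _
            apply ENNReal.ofReal_le_ofReal
            rw [hCrealdef]
            linarith
    rw [show starStarNorm μ n ρ f
        = ⨅ C : {C : ℝ≥0∞ | ∃ fQ, StarStarBoundWith μ n ρ f fQ C}, (C : ℝ≥0∞) from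
        sInf_eq_iInf' _]
    rw [ENNReal.mul_iInf_of_ne
      ((ENNReal.ofReal_pos.2 (by linarith)).ne') ENNReal.ofReal_ne_top]
    apply le_iInf
    rintro ⟨C, fQ, hC⟩
    exact sInf_le ⟨fQ, key C fQ hC⟩
end
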